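/- Let ℓ ∈ ℕ and c > 0. For a > 0 define w_a : (0,∞) → ℝ by w_a(r) := G(r/a) · c/r. Then there exist constants C_{V0}, C_{V1}, C_{V2} > 0, depending only on ℓ and F (not on a, c, r), such that for all a > 0 and all r > 0: (i) | (1/4)·r^ℓ·w_a''''(r) + (1+ℓ)·r^{ℓ−1}·w_a'''(r) + (ℓ²+ℓ)·r^{ℓ−2}·w_a''(r) | ≤ c·C_{V0}·𝟙{r > a/2}·r^{ℓ−5}; (ii) | r^ℓ·w_a'''(r) + 2(1+ℓ)·r^{ℓ−1}·w_a''(r) | ≤ c·C_{V1}·𝟙{r > a/2}·r^{ℓ−4}; (iii) | r^ℓ·w_a''(r) | ≤ c·C_{V2}·𝟙{r > a/2}·r^{ℓ−3}. (These are the bounds |V_{reg,j}(x,t)| ≤ C_{Vj}·χ(|x| > t^β/2)·|x|^{−(5−j−ℓ)} for the coefficients arising in the double commutator [−Δ/2, [V_reg, Δ/2]] r^ℓ, with scale a = t^β.) -/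

import Mathlib

/-! Writing `w_{a,c}(q) = G(q/a)·c/q` (`regCoulomb a c`), scaling gives
`w_{a,c}(r) = (c/a)·w_{1,1}(r/a)`, so `w_{a,c}⁽ⁿ⁾(r) = c·a^{-n-1}·w_{1,1}⁽ⁿ⁾(r/a)` and everything
reduces to `|w_{1,1}⁽ⁿ⁾(s)| ≤ Cₙ·𝟙{s > 1/2}·s^{-n-1}`. The profile `w_{1,1}` is smooth, vanishes
on `(-∞, 1/2]` (so do all its derivatives, by continuity also at `1/2`), equals `1/s` on `[1, ∞)`
where `|w⁽ⁿ⁾(s)| = n!·s^{-n-1}`, and its `n`-th derivative is bounded on the compact `[1/2, 1]`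
where `s^{-n-1} ≥ 1`. Smoothness of `G` comes from `G(l) = C₀ ∫_{1/2}^l ψ` with `ψ` the bump
profile extended by zero, which is smooth as a product of two `expNegInvGlue`s. -/

open MeasureTheory

/-- The bump profile `exp(−1/((r−1/2)(1−r)))`. -/
noncomputable def bumpProfile (r : ℝ) : ℝ :=
  Real.exp (-(1 / ((r - 1 / 2) * (1 - r))))

/-- The normalization constant `C₀ = (∫_{1/2}^1 exp(−1/((r−1/2)(1−r))) dr)⁻¹. -/
noncomputable def C₀ : ℝ := (∫ r in (1 / 2 : ℝ)..1, bumpProfile r)⁻¹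

/-- The smooth cutoff `F`. -/
noncomputable def Fcut (l : ℝ) : ℝ :=
  if l ≤ 1 / 2 then 1
  else if l < 1 then C₀ * ∫ r in l..(1 : ℝ), bumpProfile r
  else 0

/-- `G := 1 − F`. -/
noncomputable def Gcut (l : ℝ) : ℝ := 1 - Fcut l

open Real Set Filter Topology intervalIntegral
open scoped ContDiff

noncomputable def smoothBump (x : ℝ) : ℝ :=
  expNegInvGlue ((x - 1 / 2) / 2) * expNegInvGlue ((1 - x) / 2)

lemma contDiff_smoothBump : ContDiff ℝ ∞ smoothBump :=
  (expNegInvGlue.contDiff.comp ((contDiff_id.sub contDiff_const).div_const 2)).mul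
    (expNegInvGlue.contDiff.comp ((contDiff_const.sub contDiff_id).div_const 2))

lemma smoothBump_eq_zero_of_le {x : ℝ} (hx : x ≤ 1 / 2) : smoothBump x = 0 := by
  rw [smoothBump, expNegInvGlue.zero_of_nonpos (by linarith), zero_mul]

lemma smoothBump_eq_zero_of_ge {x : ℝ} (hx : 1 ≤ x) : smoothBump x = 0 := by
  rw [smoothBump, expNegInvGlue.zero_of_nonpos (x := (1 - x) / 2) (by linarith), mul_zero]

lemma smoothBump_pos {x : ℝ} (hx : x ∈ Ioo (1 / 2 : ℝ) 1) : 0 < smoothBump x :=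
  mul_pos (expNegInvGlue.pos_of_pos (by linarith [hx.1]))
    (expNegInvGlue.pos_of_pos (by linarith [hx.2]))

lemma smoothBump_eq_bumpProfile {x : ℝ} (hx : x ∈ Ioo (1 / 2 : ℝ) 1) :
    smoothBump x = bumpProfile x := by
  have h₁ : 0 < x - 1 / 2 := by linarith [hx.1]
  have h₂ : 0 < 1 - x := by linarith [hx.2]
  have key : 1 / ((x - 1 / 2) * (1 - x)) = ((x - 1 / 2) / 2)⁻¹ + ((1 - x) / 2)⁻¹ := by
    rw [inv_div, inv_div, div_add_div _ _ h₁.ne' h₂.ne']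
    ring
  rw [smoothBump, expNegInvGlue, if_neg (by linarith), expNegInvGlue, if_neg (by linarith),
    ← Real.exp_add, bumpProfile, key, neg_add]

lemma intervalIntegrable_smoothBump (a b : ℝ) : IntervalIntegrable smoothBump volume a b :=
  contDiff_smoothBump.continuous.intervalIntegrable a b

lemma integral_bumpProfile_eq {l : ℝ} (hl : 1 / 2 ≤ l) (hl₁ : l ≤ 1) :
    ∫ r in l..1, bumpProfile r = ∫ r in l..1, smoothBump r :=
  integral_congr_Ioo_of_le hl₁ fun _ hx =>
    (smoothBump_eq_bumpProfile ⟨hl.trans_lt hx.1, hx.2⟩).symm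

lemma C₀_mul_integral_smoothBump : C₀ * ∫ r in (1 / 2 : ℝ)..1, smoothBump r = 1 := by
  have hpos : 0 < ∫ r in (1 / 2 : ℝ)..1, smoothBump r :=
    intervalIntegral_pos_of_pos_on (intervalIntegrable_smoothBump _ _)
      (fun _ hx => smoothBump_pos hx) (by norm_num)
  rw [C₀, integral_bumpProfile_eq le_rfl (by norm_num), inv_mul_cancel₀ hpos.ne']

lemma Gcut_eq_integral (l : ℝ) : Gcut l = C₀ * ∫ t in (1 / 2 : ℝ)..l, smoothBump t := by
  have hsplit := integral_add_adjacent_intervals (intervalIntegrable_smoothBump (1 / 2) l)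
    (intervalIntegrable_smoothBump l 1)
  rw [Gcut, Fcut]
  split_ifs with h₁ h₂
  · have h : EqOn smoothBump 0 (uIcc (1 / 2) l) := fun x hx =>
      smoothBump_eq_zero_of_le (hx.2.trans (max_eq_left h₁).le)
    rw [integral_congr h]
    simp
  · rw [integral_bumpProfile_eq (not_le.1 h₁).le h₂.le]
    linear_combination (-C₀) * hsplit - C₀_mul_integral_smoothBump
  · have h : EqOn smoothBump 0 (uIcc l 1) := fun x hx =>
      smoothBump_eq_zero_of_ge ((min_eq_right (not_lt.1 h₂)).ge.trans hx.1)
    rw [integral_congr h] at hsplit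
    simp only [Pi.zero_apply, intervalIntegral.integral_zero, add_zero] at hsplit
    linear_combination (-C₀) * hsplit - C₀_mul_integral_smoothBump

lemma hasDerivAt_Gcut (x : ℝ) : HasDerivAt Gcut (C₀ * smoothBump x) x := by
  rw [show Gcut = _ from funext Gcut_eq_integral]
  exact ((contDiff_smoothBump.continuous.integral_hasStrictDerivAt _ x).hasDerivAt).const_mul C₀

lemma contDiff_Gcut : ContDiff ℝ ∞ Gcut := by
  refine contDiff_infty_iff_deriv.2 ⟨fun x => (hasDerivAt_Gcut x).differentiableAt, ?_⟩
  rw [show deriv Gcut = _ from funext fun x => (hasDerivAt_Gcut x).deriv]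
  exact contDiff_const.mul contDiff_smoothBump

lemma Gcut_eq_zero_of_le {l : ℝ} (hl : l ≤ 1 / 2) : Gcut l = 0 := by
  rw [Gcut, Fcut, if_pos hl, sub_self]

lemma Gcut_eq_one_of_ge {l : ℝ} (hl : 1 ≤ l) : Gcut l = 1 := by
  rw [Gcut, Fcut, if_neg (by linarith), if_neg (not_lt.2 hl), sub_zero]

lemma iteratedDeriv_eqOn_zero_of_eqOn_Iic {E : Type*} [NormedAddCommGroup E] [NormedSpace ℝ E]
    {n : ℕ} {f : ℝ → E} {b : ℝ}
    (hf : ContDiff ℝ n f) (h : EqOn f 0 (Iic b)) : EqOn (iteratedDeriv n f) 0 (Iic b) := by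
  have hIio : EqOn (iteratedDeriv n f) 0 (Iio b) := fun x hx => by
    have hf₀ : f =ᶠ[𝓝 x] fun _ => 0 :=
      eventually_of_mem (Iio_mem_nhds hx) fun y hy => h (Iio_subset_Iic_self hy)
    simp [hf₀.iteratedDeriv_eq n]
  simpa only [closure_Iio] using
    hIio.closure (hf.continuous_iteratedDeriv n le_rfl) continuous_const

noncomputable def regCoulomb (a c q : ℝ) : ℝ := Gcut (q / a) * (c / q)

lemma regCoulomb_eq_rescale {a : ℝ} (ha : a ≠ 0) (c : ℝ) :
    regCoulomb a c = fun q => c / a * regCoulomb 1 1 (a⁻¹ * q) := by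
  ext q
  rcases eq_or_ne q 0 with rfl | hq
  · simp [regCoulomb]
  · simp only [regCoulomb, div_one]
    field_simp

lemma regCoulomb_one_one_eq_zero_of_le {s : ℝ} (hs : s ≤ 1 / 2) : regCoulomb 1 1 s = 0 := by
  rw [regCoulomb, div_one, Gcut_eq_zero_of_le hs, zero_mul]

lemma regCoulomb_one_one_eq_inv_of_ge {s : ℝ} (hs : 1 ≤ s) : regCoulomb 1 1 s = s⁻¹ := by
  rw [regCoulomb, div_one, Gcut_eq_one_of_ge hs, one_mul, one_div]

lemma contDiff_regCoulomb_one_one : ContDiff ℝ ∞ (regCoulomb 1 1) := by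
  refine contDiff_iff_contDiffAt.2 fun x => ?_
  rcases lt_or_ge x (1 / 2) with hx | hx
  · exact (contDiffAt_const (c := (0 : ℝ))).congr_of_eventuallyEq <|
      eventually_of_mem (Iio_mem_nhds hx) fun y hy =>
        regCoulomb_one_one_eq_zero_of_le (le_of_lt hy)
  · exact (contDiff_Gcut.comp (contDiff_id.div_const 1)).contDiffAt.mul
      (contDiffAt_const.div contDiffAt_id (by linarith))

lemma iteratedDeriv_regCoulomb_one_one_of_gt (n : ℕ) {s : ℝ} (hs : 1 < s) :
    iteratedDeriv n (regCoulomb 1 1) s = (-1) ^ n * n.factorial * s ^ (-1 - n : ℤ) := by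
  have h : regCoulomb 1 1 =ᶠ[𝓝 s] Inv.inv :=
    eventually_of_mem (Ioi_mem_nhds hs) fun y hy =>
      regCoulomb_one_one_eq_inv_of_ge (le_of_lt hy)
  rw [h.iteratedDeriv_eq n, iteratedDeriv_eq_iterate, iter_deriv_inv]

lemma exists_abs_iteratedDeriv_regCoulomb_one_one_le (n : ℕ) :
    ∃ C > 0, ∀ s > 0, |iteratedDeriv n (regCoulomb 1 1) s|
      ≤ C * (if 1 / 2 < s then 1 else 0) * s ^ (-(n : ℝ) - 1) := by
  have hsmooth : ContDiff ℝ n (regCoulomb 1 1) :=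
    contDiff_regCoulomb_one_one.of_le (mod_cast le_top)
  obtain ⟨M, hM⟩ := (isCompact_Icc (a := (1 / 2 : ℝ)) (b := 1)).exists_bound_of_continuousOn
    (hsmooth.continuous_iteratedDeriv n le_rfl).continuousOn
  refine ⟨max M n.factorial, lt_max_of_lt_right (by positivity), fun s hs => ?_⟩
  rcases le_or_gt s (1 / 2) with hs₀ | hs₀
  · rw [iteratedDeriv_eqOn_zero_of_eqOn_Iic hsmooth
      (fun _ hy => regCoulomb_one_one_eq_zero_of_le hy) hs₀, if_neg (not_lt.2 hs₀)]
    simp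
  rw [if_pos hs₀, mul_one]
  rcases le_or_gt s 1 with hs₁ | hs₁
  · calc |iteratedDeriv n (regCoulomb 1 1) s| ≤ M := hM s ⟨hs₀.le, hs₁⟩
      _ ≤ max M n.factorial := le_max_left _ _
      _ ≤ max M n.factorial * s ^ (-(n : ℝ) - 1) :=
        le_mul_of_one_le_right (by positivity) (one_le_rpow_of_pos_of_le_one_of_nonpos hs hs₁
          (by linarith [n.cast_nonneg (α := ℝ)]))
  · rw [iteratedDeriv_regCoulomb_one_one_of_gt n hs₁, abs_mul, abs_mul, abs_pow, abs_neg,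
      abs_one, one_pow, one_mul, Nat.abs_cast, abs_of_pos (zpow_pos hs _), ← rpow_intCast]
    push_cast
    rw [show -1 - (n : ℝ) = -(n : ℝ) - 1 by ring]
    gcongr
    exact le_max_right _ _

lemma exists_abs_iteratedDeriv_regCoulomb_le (n : ℕ) :
    ∃ C > 0, ∀ c a : ℝ, 0 < a → ∀ r > 0, |iteratedDeriv n (regCoulomb a c) r|
      ≤ |c| * C * (if a / 2 < r then 1 else 0) * r ^ (-(n : ℝ) - 1) := by
  obtain ⟨C, hC, hbound⟩ := exists_abs_iteratedDeriv_regCoulomb_one_one_le n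
  refine ⟨C, hC, fun c a ha r hr => ?_⟩
  have hscale : a⁻¹ ^ n / a * (a⁻¹ * r) ^ (-(n : ℝ) - 1) = r ^ (-(n : ℝ) - 1) := by
    rw [inv_pow, mul_rpow (inv_nonneg.2 ha.le) hr.le, inv_rpow ha.le, rpow_sub ha,
      rpow_neg ha.le, rpow_natCast, rpow_one]
    field_simp
  have hsupport : 1 / 2 < a⁻¹ * r ↔ a / 2 < r := by
    rw [inv_mul_eq_div, lt_div_iff₀ ha]
    constructor <;> intro h <;> linarith
  rw [regCoulomb_eq_rescale ha.ne', iteratedDeriv_const_mul_field,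
    iteratedDeriv_comp_const_mul (contDiff_regCoulomb_one_one.of_le (mod_cast le_top))]
  calc |c / a * (a⁻¹ ^ n * iteratedDeriv n (regCoulomb 1 1) (a⁻¹ * r))|
      = |c| * (a⁻¹ ^ n / a) * |iteratedDeriv n (regCoulomb 1 1) (a⁻¹ * r)| := by
        rw [abs_mul, abs_mul, abs_div, abs_of_pos ha, abs_of_pos (by positivity : 0 < a⁻¹ ^ n)]
        ring
    _ ≤ |c| * (a⁻¹ ^ n / a) * (C * (if 1 / 2 < a⁻¹ * r then 1 else 0) *
          (a⁻¹ * r) ^ (-(n : ℝ) - 1)) := by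
        gcongr
        exact hbound _ (by positivity)
    _ = |c| * C * (if a / 2 < r then 1 else 0) * r ^ (-(n : ℝ) - 1) := by
        rw [← hscale, if_congr hsupport rfl rfl]
        ring

lemma abs_mul_rpow_mul_le {r x b t α s u : ℝ} (hr : 0 < r) (hx : |x| ≤ b * r ^ t)
    (hα : 0 ≤ α) (hu : s + t = u) : |α * r ^ s * x| ≤ α * b * r ^ u := by
  rw [abs_mul, abs_mul, abs_of_nonneg hα, abs_of_pos (rpow_pos_of_pos hr s), ← hu, rpow_add hr]
  calc α * r ^ s * |x| ≤ α * r ^ s * (b * r ^ t) := by gcongr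
    _ = α * b * (r ^ s * r ^ t) := by ring

theorem regularized_coulomb_commutator_coefficient_bounds (ℓ : ℕ) :
    ∃ CV0 CV1 CV2 : ℝ, 0 < CV0 ∧ 0 < CV1 ∧ 0 < CV2 ∧
      ∀ c > (0 : ℝ), ∀ a > (0 : ℝ), ∀ r > (0 : ℝ),
        (|(1 / 4) * r ^ (ℓ : ℝ) * iteratedDeriv 4 (fun q => Gcut (q / a) * (c / q)) r
            + (1 + (ℓ : ℝ)) * r ^ ((ℓ : ℝ) - 1)
                * iteratedDeriv 3 (fun q => Gcut (q / a) * (c / q)) r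
            + ((ℓ : ℝ) ^ 2 + ℓ) * r ^ ((ℓ : ℝ) - 2)
                * iteratedDeriv 2 (fun q => Gcut (q / a) * (c / q)) r|
          ≤ c * CV0 * (if a / 2 < r then 1 else 0) * r ^ ((ℓ : ℝ) - 5)) ∧
        (|r ^ (ℓ : ℝ) * iteratedDeriv 3 (fun q => Gcut (q / a) * (c / q)) r
            + 2 * (1 + (ℓ : ℝ)) * r ^ ((ℓ : ℝ) - 1)
                * iteratedDeriv 2 (fun q => Gcut (q / a) * (c / q)) r|
          ≤ c * CV1 * (if a / 2 < r then 1 else 0) * r ^ ((ℓ : ℝ) - 4)) ∧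
        (|r ^ (ℓ : ℝ) * iteratedDeriv 2 (fun q => Gcut (q / a) * (c / q)) r|
          ≤ c * CV2 * (if a / 2 < r then 1 else 0) * r ^ ((ℓ : ℝ) - 3)) := by
  obtain ⟨C₂, hC₂, h₂⟩ := exists_abs_iteratedDeriv_regCoulomb_le 2
  obtain ⟨C₃, hC₃, h₃⟩ := exists_abs_iteratedDeriv_regCoulomb_le 3
  obtain ⟨C₄, hC₄, h₄⟩ := exists_abs_iteratedDeriv_regCoulomb_le 4
  refine ⟨C₄ / 4 + (1 + ℓ) * C₃ + (ℓ ^ 2 + ℓ) * C₂, C₃ + 2 * (1 + ℓ) * C₂, C₂,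
    by positivity, by positivity, hC₂, fun c hc a ha r hr => ?_⟩
  rw [show (fun q => Gcut (q / a) * (c / q)) = regCoulomb a c from rfl]
  have b₂ := h₂ c a ha r hr
  have b₃ := h₃ c a ha r hr
  have b₄ := h₄ c a ha r hr
  rw [abs_of_pos hc] at b₂ b₃ b₄
  refine ⟨?_, ?_, ?_⟩
  · have e₄ := abs_mul_rpow_mul_le (α := 1 / 4) (s := ℓ) (u := ℓ - 5) hr b₄ (by norm_num)
      (by push_cast; ring)
    have e₃ := abs_mul_rpow_mul_le (α := 1 + ℓ) (s := ℓ - 1) (u := ℓ - 5) hr b₃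
      (by positivity) (by push_cast; ring)
    have e₂ := abs_mul_rpow_mul_le (α := ℓ ^ 2 + ℓ) (s := ℓ - 2) (u := ℓ - 5) hr b₂
      (by positivity) (by push_cast; ring)
    linarith [abs_add_three (1 / 4 * r ^ (ℓ : ℝ) * iteratedDeriv 4 (regCoulomb a c) r)
      ((1 + ℓ) * r ^ ((ℓ : ℝ) - 1) * iteratedDeriv 3 (regCoulomb a c) r)
      ((ℓ ^ 2 + ℓ) * r ^ ((ℓ : ℝ) - 2) * iteratedDeriv 2 (regCoulomb a c) r)]
  · have e₃ := abs_mul_rpow_mul_le (α := 1) (s := ℓ) (u := ℓ - 4) hr b₃ zero_le_one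
      (by push_cast; ring)
    have e₂ := abs_mul_rpow_mul_le (α := 2 * (1 + ℓ)) (s := ℓ - 1) (u := ℓ - 4) hr b₂
      (by positivity) (by push_cast; ring)
    rw [one_mul, one_mul] at e₃
    linarith [abs_add_le (r ^ (ℓ : ℝ) * iteratedDeriv 3 (regCoulomb a c) r)
      (2 * (1 + ℓ) * r ^ ((ℓ : ℝ) - 1) * iteratedDeriv 2 (regCoulomb a c) r)]
  · simpa using abs_mul_rpow_mul_le (α := 1) (s := ℓ) (u := ℓ - 3) hr b₂ zero_le_one
      (by push_cast; ring)
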